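/- arXiv:1210.4094 — 2 statements merged into one kernel-verified Lean document; each statement's English description precedes it below -/
import Mathlib

section
/- In a group G, the intersection of two rational subsets need not be considered; but for free groups, the class of rational subsets is closed under intersection and complement (Benois' theorem consequence). -/
/-!
By Benois' theorem, a subset `X` of a finitely generated free group is rational exactly when the
language `toWord '' X` of reduced words representing its elements is regular. As `toWord` is
injective, it sends intersections to intersections and complements to complements relative to the
regular language of all reduced words, and regular languages are closed under both operations.

Benois' theorem rests on two facts. The rational subsets of a monoid are the images of the regular
languages under a surjective morphism from a free monoid (Kleene's theorem; product and star of
regular languages are regular by Myhill–Nerode). And the reduced forms of the words of a regular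
language `L` form a regular language: they are the reduced words to which some word of `L` reduces,
and an automaton for `L` recognises those once each transition is allowed to read any word
reducing to a single letter.
-/

open Pointwise

/-- The rational subsets of a monoid: the smallest class containing finite sets
and closed under union, product, and generated submonoid (star). -/
inductive IsRational {M : Type*} [Monoid M] : Set M → Prop
  | finite (s : Set M) : s.Finite → IsRational s
  | union (s t : Set M) : IsRational s → IsRational t → IsRational (s ∪ t)
  | mul (s t : Set M) : IsRational s → IsRational t → IsRational (s * t)
  | star (s : Set M) : IsRational s → IsRational ((Submonoid.closure s : Submonoid M) : Set M)

open Computability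

namespace Language

variable {α : Type*}

theorem IsRegular.of_leftQuotient_mem_image {κ : Type*} {L : Language α} {K : Set κ}
    (hK : K.Finite) (G : κ → Language α) (h : ∀ x, L.leftQuotient x ∈ G '' K) : L.IsRegular :=
  .of_finite_range_leftQuotient <| (hK.image G).subset <| Set.range_subset_iff.2 h

theorem isRegular_of_finite {L : Language α} (hL : (L : Set (List α)).Finite) : L.IsRegular := by
  classical
  refine .of_finite_range_leftQuotient <|
    ((hL.biUnion fun w _ => w.inits.toFinset.finite_toSet).image L.leftQuotient).insert 0
      |>.subset ?_
  rintro _ ⟨x, rfl⟩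
  by_cases hx : ∃ y, x ++ y ∈ L
  · obtain ⟨y, hy⟩ := hx
    exact Or.inr ⟨x, Set.mem_biUnion hy (by simp), rfl⟩
  · exact Or.inl (Set.eq_empty_of_forall_notMem fun y hy => hx ⟨y, hy⟩)

theorem leftQuotient_mul (l m : Language α) (x : List α) :
    (l * m).leftQuotient x =
      {y | y ∈ l.leftQuotient x * m ∨ ∃ u ∈ l, ∃ v, u ++ v = x ∧ y ∈ m.leftQuotient v} := by
  ext y
  simp only [mem_leftQuotient, mem_mul]
  constructor
  · rintro ⟨a, ha, b, hb, hab⟩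
    rcases List.append_eq_append_iff.1 hab with ⟨c, rfl, rfl⟩ | ⟨c, rfl, rfl⟩
    · exact Or.inr ⟨a, ha, c, rfl, hb⟩
    · exact Or.inl ⟨c, ha, b, hb, rfl⟩
  · rintro (⟨a, ha, b, hb, rfl⟩ | ⟨u, hu, v, rfl, hv⟩)
    · exact ⟨x ++ a, ha, b, hb, by simp⟩
    · exact ⟨u, hu, v ++ y, hv, by simp⟩

theorem IsRegular.mul {l m : Language α} (hl : l.IsRegular) (hm : m.IsRegular) :
    (l * m).IsRegular := by
  refine IsRegular.of_leftQuotient_mem_image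
    (hl.finite_range_leftQuotient.prod hm.finite_range_leftQuotient.finite_subsets)
    (fun k => {y | y ∈ k.1 * m ∨ ∃ A ∈ k.2, y ∈ A}) fun x => ?_
  refine ⟨(l.leftQuotient x, m.leftQuotient '' {v | ∃ u ∈ l, u ++ v = x}),
    ⟨⟨x, rfl⟩, by rintro _ ⟨v, -, rfl⟩; exact ⟨v, rfl⟩⟩, ?_⟩
  rw [leftQuotient_mul]
  ext y
  simp only [Set.mem_ofPred_eq, Set.mem_image]
  grind

theorem leftQuotient_kstar (l : Language α) (x : List α) :
    (l∗).leftQuotient x =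
      {y | (x ∈ l∗ ∧ y = []) ∨ ∃ u ∈ l∗, ∃ v, u ++ v = x ∧ y ∈ l.leftQuotient v * l∗} := by
  ext y
  simp only [mem_leftQuotient]
  constructor
  · rw [mem_kstar]
    rintro ⟨S, hS, hSl⟩
    induction S generalizing x with
    | nil =>
      obtain ⟨rfl, rfl⟩ := List.append_eq_nil_iff.1 hS
      exact Or.inl ⟨nil_mem_kstar l, rfl⟩
    | cons s S ih =>
      rw [List.flatten_cons] at hS
      rcases List.append_eq_append_iff.1 hS with ⟨c, rfl, rfl⟩ | ⟨c, rfl, hc⟩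
      · refine Or.inr ⟨[], nil_mem_kstar l, x, rfl, c, ?_, S.flatten, ?_, rfl⟩
        · exact hSl _ List.mem_cons_self
        · exact join_mem_kstar fun y hy => hSl y (List.mem_cons_of_mem _ hy)
      · have hs : s ∈ l := hSl s List.mem_cons_self
        rcases ih c hc.symm fun y hy => hSl y (List.mem_cons_of_mem _ hy) with
          ⟨hc', rfl⟩ | ⟨u, hu, v, rfl, hv⟩
        · exact Or.inl ⟨mul_kstar_le_kstar (α := Language α) (append_mem_mul hs hc'), rfl⟩
        · refine Or.inr ⟨s ++ u, ?_, v, by simp, hv⟩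
          exact mul_kstar_le_kstar (α := Language α) (append_mem_mul hs hu)
  · rintro (⟨hx, rfl⟩ | ⟨u, hu, v, rfl, a, ha, b, hb, rfl⟩)
    · simpa using hx
    · have hab : v ++ a ++ b ∈ l∗ :=
        mul_kstar_le_kstar (α := Language α) (append_mem_mul (ha : v ++ a ∈ l) hb)
      have h : u ++ (v ++ a ++ b) ∈ l∗ * l∗ := append_mem_mul hu hab
      rw [kstar_mul_kstar] at h
      simpa using h

theorem IsRegular.kstar {l : Language α} (hl : l.IsRegular) : l∗.IsRegular := by
  refine IsRegular.of_leftQuotient_mem_image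
    (Set.finite_univ.prod hl.finite_range_leftQuotient.finite_subsets)
    (fun k => {y | (k.1 ∧ y = []) ∨ ∃ A ∈ k.2, y ∈ A * l∗}) fun x => ?_
  refine ⟨(x ∈ l∗, l.leftQuotient '' {v | ∃ u ∈ l∗, u ++ v = x}),
    ⟨trivial, by rintro _ ⟨v, -, rfl⟩; exact ⟨v, rfl⟩⟩, ?_⟩
  rw [leftQuotient_kstar]
  ext y
  simp only [Set.mem_ofPred_eq, Set.mem_image]
  grind

theorem isRegular_setOf_isChain [Finite α] (R : α → α → Prop) :
    Language.IsRegular {w : List α | w.IsChain R} := by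
  refine IsRegular.of_leftQuotient_mem_image (Set.finite_univ (α := Prop × Option α))
    (fun k => {y | k.1 ∧ y.IsChain R ∧ ∀ a ∈ k.2, ∀ b ∈ y.head?, R a b}) fun x =>
    ⟨(x.IsChain R, x.getLast?), trivial, ?_⟩
  ext y
  exact List.isChain_append.symm

variable {M : Type*} [Monoid M] {f : List α → M}

theorem image_mul (hf : ∀ u v, f (u ++ v) = f u * f v) (l m : Language α) :
    f '' (l * m) = f '' l * f '' m := by
  rw [Language.mul_def]
  exact (Set.image_image2_distrib hf).trans Set.image2_mul

theorem image_kstar (hf_nil : f [] = 1) (hf : ∀ u v, f (u ++ v) = f u * f v)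
    (l : Language α) : f '' (l∗ : Language α) = Submonoid.closure (f '' l) := by
  ext g
  constructor
  · rintro ⟨_, ⟨S, rfl, hS⟩, rfl⟩
    induction S with
    | nil => simp [hf_nil]
    | cons s S ih =>
      rw [List.flatten_cons, hf]
      exact mul_mem (Submonoid.subset_closure ⟨s, hS s List.mem_cons_self, rfl⟩)
        (ih fun y hy => hS y (List.mem_cons_of_mem _ hy))
  · intro hg
    induction hg using Submonoid.closure_induction with
    | mem _ h =>
      obtain ⟨w, hw, rfl⟩ := h
      exact ⟨w, le_kstar (α := Language α) hw, rfl⟩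
    | one => exact ⟨[], nil_mem_kstar l, hf_nil⟩
    | mul _ _ _ _ hx hy =>
      obtain ⟨u, hu, rfl⟩ := hx
      obtain ⟨v, hv, rfl⟩ := hy
      refine ⟨u ++ v, ?_, hf u v⟩
      rw [← kstar_mul_kstar l]
      exact append_mem_mul hu hv

end Language

namespace IsRational

variable {M : Type*} [Monoid M]

theorem biUnion {ι : Type*} {t : Set ι} (ht : t.Finite) {s : ι → Set M}
    (hs : ∀ i ∈ t, IsRational (s i)) : IsRational (⋃ i ∈ t, s i) := by
  induction t, ht using Set.Finite.induction_on with
  | empty => simpa using IsRational.finite ∅ Set.finite_empty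
  | insert _ _ ih =>
    rw [Set.biUnion_insert]
    exact .union _ _ (hs _ (Set.mem_insert _ _)) (ih fun j hj => hs j (Set.mem_insert_of_mem _ hj))

end IsRational

namespace DFA

variable {α σ : Type*} (M : DFA α σ)

/-- `M.RunsWithin S p q w`: reading `w` from `p` leads to `q`, and every state strictly in
between lies in `S`. -/
inductive RunsWithin (S : Set σ) : σ → σ → List α → Prop
  | nil (p : σ) : RunsWithin S p p []
  | single (p : σ) (a : α) : RunsWithin S p (M.step p a) [a]
  | cons {p q : σ} (a : α) {w : List α} :
      M.step p a ∈ S → RunsWithin S (M.step p a) q w → RunsWithin S p q (a :: w)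

def pathLang (S : Set σ) (p q : σ) : Language α := {w | M.RunsWithin S p q w}

variable {M} {S T : Set σ} {p q r : σ} {u v w : List α}

theorem RunsWithin.mono (hST : S ⊆ T) (h : M.RunsWithin S p q w) : M.RunsWithin T p q w := by
  induction h with
  | nil p => exact .nil p
  | single p a => exact .single p a
  | cons a hS _ ih => exact .cons a (hST hS) ih

theorem RunsWithin.append (hr : r ∈ S) (hu : M.RunsWithin S p r u) (hv : M.RunsWithin S r q v) :
    M.RunsWithin S p q (u ++ v) := by
  induction hu with
  | nil p => exact hv
  | single p a => exact .cons a hr hv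
  | cons a hS _ ih => exact .cons a hS (ih hr hv)

theorem runsWithin_univ_iff : M.RunsWithin Set.univ p q w ↔ M.evalFrom p w = q := by
  constructor
  · intro h
    induction h with
    | nil p => rfl
    | single p a => rfl
    | cons a _ _ ih => rwa [evalFrom_cons]
  · rintro rfl
    induction w generalizing p with
    | nil => exact .nil p
    | cons a w ih => exact .cons a (Set.mem_univ _) ih

theorem RunsWithin.length_le_one (h : M.RunsWithin ∅ p q w) : w.length ≤ 1 := by
  cases h with
  | nil => simp
  | single => simp
  | cons _ h => exact absurd h (Set.notMem_empty _)

theorem kstar_pathLang_le : (M.pathLang S r r)∗ ≤ M.pathLang (insert r S) r r := by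
  rintro _ ⟨L, rfl, hL⟩
  induction L with
  | nil => exact .nil r
  | cons w L ih =>
    exact ((hL w List.mem_cons_self).mono (Set.subset_insert r S)).append (Set.mem_insert r S)
      (ih fun y hy => hL y (List.mem_cons_of_mem _ hy))

theorem pathLang_insert :
    M.pathLang (insert r S) p q =
      M.pathLang S p q + M.pathLang S p r * (M.pathLang S r r)∗ * M.pathLang S r q := by
  ext w
  constructor
  · intro h
    induction h with
    | nil p => exact Or.inl (.nil p)
    | single p a => exact Or.inl (.single p a)
    | @cons p q a w hmem _ ih =>
      rcases hmem with hr | hS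
      · rw [hr] at ih
        have hw : w ∈ (M.pathLang S r r)∗ * M.pathLang S r q := by
          rcases ih with h | ⟨_, ⟨x, hx, y, hy, rfl⟩, z, hz, rfl⟩
          · exact ⟨[], Language.nil_mem_kstar _, w, h, rfl⟩
          · exact ⟨x ++ y, mul_kstar_le_kstar (α := Language α) ⟨x, hx, y, hy, rfl⟩, z, hz, rfl⟩
        refine Or.inr ?_
        rw [mul_assoc]
        exact Language.append_mem_mul (a := [a]) (hr ▸ .single p a) hw
      · rcases ih with h | ⟨_, ⟨x, hx, y, hy, rfl⟩, z, hz, rfl⟩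
        · exact Or.inl (.cons a hS h)
        · exact Or.inr ⟨_, ⟨a :: x, .cons a hS hx, y, hy, rfl⟩, z, hz, rfl⟩
  · rintro (h | ⟨_, ⟨x, hx, y, hy, rfl⟩, z, hz, rfl⟩)
    · exact RunsWithin.mono (Set.subset_insert r S) h
    · have hr := Set.mem_insert r S
      exact ((hx.mono (Set.subset_insert r S)).append hr (kstar_pathLang_le hy)).append hr
        (hz.mono (Set.subset_insert r S))

end DFA

section Kleene

variable {α M : Type*} [Monoid M] {f : List α → M}

theorem DFA.isRational_image_pathLang [Finite α] (hf_nil : f [] = 1)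
    (hf : ∀ u v, f (u ++ v) = f u * f v) {σ : Type*} (D : DFA α σ) (S : Finset σ) (p q : σ) :
    IsRational (f '' D.pathLang S p q) := by
  classical
  induction S using Finset.induction_on generalizing p q with
  | empty =>
    rw [Finset.coe_empty]
    exact .finite _ (((List.finite_length_le α 1).image f).subset
      (Set.image_mono fun w hw => DFA.RunsWithin.length_le_one hw))
  | insert r S _ ih =>
    rw [Finset.coe_insert, DFA.pathLang_insert]
    refine (Set.image_union f _ _).symm ▸ .union _ _ (ih p q) ?_
    rw [Language.image_mul hf, Language.image_mul hf, Language.image_kstar hf_nil hf]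
    exact .mul _ _ (.mul _ _ (ih p r) (.star _ (ih r r))) (ih r q)

theorem Language.IsRegular.isRational_image [Finite α] (hf_nil : f [] = 1)
    (hf : ∀ u v, f (u ++ v) = f u * f v) {L : Language α} (hL : L.IsRegular) :
    IsRational (f '' L) := by
  obtain ⟨σ, _, D, rfl⟩ := hL
  have hD : f '' D.accepts = ⋃ q ∈ D.accept, f '' D.pathLang Set.univ D.start q := by
    ext g
    constructor
    · rintro ⟨w, hw, rfl⟩
      exact Set.mem_biUnion hw ⟨w, DFA.runsWithin_univ_iff.2 rfl, rfl⟩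
    · intro hg
      obtain ⟨q, hq, w, hw, rfl⟩ := Set.mem_iUnion₂.1 hg
      exact ⟨w, (D.mem_accepts).2 (by rwa [DFA.eval, DFA.runsWithin_univ_iff.1 hw]), rfl⟩
  rw [hD]
  exact IsRational.biUnion (Set.toFinite _) fun q _ => by
    simpa using D.isRational_image_pathLang hf_nil hf Finset.univ D.start q

theorem IsRational.exists_isRegular_image (hf_surj : f.Surjective) (hf_nil : f [] = 1)
    (hf : ∀ u v, f (u ++ v) = f u * f v) {X : Set M} (hX : IsRational X) :
    ∃ L : Language α, L.IsRegular ∧ f '' L = X := by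
  induction hX with
  | finite X hX =>
    refine ⟨Function.surjInv hf_surj '' X, Language.isRegular_of_finite (hX.image _), ?_⟩
    rw [Set.image_image, funext (Function.surjInv_eq hf_surj), Set.image_id']
  | union X Y _ _ ihX ihY =>
    obtain ⟨L, hL, rfl⟩ := ihX
    obtain ⟨K, hK, rfl⟩ := ihY
    exact ⟨L + K, hL.add hK, Set.image_union f L K⟩
  | mul X Y _ _ ihX ihY =>
    obtain ⟨L, hL, rfl⟩ := ihX
    obtain ⟨K, hK, rfl⟩ := ihY
    exact ⟨L * K, hL.mul hK, Language.image_mul hf L K⟩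
  | star X _ ih =>
    obtain ⟨L, hL, rfl⟩ := ih
    exact ⟨L∗, hL.kstar, Language.image_kstar hf_nil hf L⟩

end Kleene

namespace DFA

open FreeGroup

variable {α σ : Type*} (M : DFA (α × Bool) σ)

/-- Reads a letter `a` wherever `M` can read a word reducing to `[a]`, and accepts wherever `M`
can still reach acceptance through a word reducing to `[]`. -/
def redNFA : NFA (α × Bool) σ where
  step p a := {q | ∃ v, Red v [a] ∧ M.evalFrom p v = q}
  start := {M.start}
  accept := {p | ∃ v, Red v [] ∧ M.evalFrom p v ∈ M.accept}

variable {M}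

theorem exists_red_of_mem_evalFrom_redNFA {p q : σ} {u : List (α × Bool)}
    (h : q ∈ M.redNFA.evalFrom {p} u) : ∃ v, Red v u ∧ M.evalFrom p v = q := by
  induction u generalizing p with
  | nil => exact ⟨[], Red.refl, (Set.mem_singleton_iff.1 h).symm⟩
  | cons a u ih =>
    rw [NFA.evalFrom_cons, NFA.stepSet_singleton, NFA.mem_evalFrom_iff_exists] at h
    obtain ⟨r, ⟨v₁, hv₁, rfl⟩, hq⟩ := h
    obtain ⟨v₂, hv₂, rfl⟩ := ih hq
    exact ⟨v₁ ++ v₂, Red.append_append hv₁ hv₂, M.evalFrom_of_append p v₁ v₂⟩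

theorem exists_mem_evalFrom_redNFA_of_red {p : σ} {u v : List (α × Bool)} (h : Red v u) :
    ∃ t ∈ M.redNFA.evalFrom {p} u, ∃ w, Red w [] ∧ M.evalFrom t w = M.evalFrom p v := by
  induction u generalizing p v with
  | nil => exact ⟨p, rfl, v, h, rfl⟩
  | cons a u ih =>
    obtain ⟨v₁, v₂, rfl, hv₁, hv₂⟩ := Red.to_append_iff.1 (show Red v ([a] ++ u) from h)
    obtain ⟨t, ht, w, hw, hwt⟩ := ih (p := M.evalFrom p v₁) hv₂
    refine ⟨t, ?_, w, hw, by rw [hwt, evalFrom_of_append]⟩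
    rw [NFA.evalFrom_cons, NFA.stepSet_singleton, NFA.mem_evalFrom_iff_exists]
    exact ⟨_, ⟨v₁, hv₁, rfl⟩, ht⟩

theorem accepts_redNFA : M.redNFA.accepts = {u | ∃ v ∈ M.accepts, Red v u} := by
  ext u
  rw [NFA.mem_accepts]
  constructor
  · rintro ⟨q, ⟨w, hw, hwq⟩, hq⟩
    obtain ⟨v, hv, rfl⟩ := exists_red_of_mem_evalFrom_redNFA hq
    refine ⟨v ++ w, ?_, by simpa using Red.append_append hv hw⟩
    rwa [mem_accepts, eval, evalFrom_of_append]
  · rintro ⟨v, hv, hvu⟩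
    obtain ⟨t, ht, w, hw, hwt⟩ := exists_mem_evalFrom_redNFA_of_red (p := M.start) hvu
    exact ⟨t, ⟨w, hw, hwt ▸ hv⟩, ht⟩

end DFA

namespace FreeGroup

variable {α : Type*}

theorem range_toWord [DecidableEq α] :
    Set.range (toWord : FreeGroup α → _) = {w | IsReduced w} := by
  ext w
  constructor
  · rintro ⟨g, rfl⟩
    exact isReduced_toWord
  · intro h
    exact ⟨mk w, toWord_mk.trans (isReduced_iff_reduce_eq.1 h)⟩

theorem isRegular_setOf_isReduced [Finite α] :
    Language.IsRegular {w : List (α × Bool) | IsReduced w} :=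
  Language.isRegular_setOf_isChain _

theorem _root_.Language.IsRegular.setOf_exists_red {L : Language (α × Bool)} (hL : L.IsRegular) :
    Language.IsRegular {u | ∃ v ∈ L, Red v u} := by
  obtain ⟨σ, _, M, rfl⟩ := hL
  exact ⟨_, inferInstance, M.redNFA.toDFA, by rw [NFA.toDFA_correct, DFA.accepts_redNFA]⟩

theorem isRational_iff_isRegular_image_toWord [Finite α] [DecidableEq α] {X : Set (FreeGroup α)} :
    IsRational X ↔ Language.IsRegular (toWord '' X : Language (α × Bool)) := by
  have hmk_nil : mk ([] : List (α × Bool)) = 1 := rfl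
  have hmk_append : ∀ u v : List (α × Bool), mk (u ++ v) = mk u * mk v := fun _ _ => mul_mk.symm
  constructor
  · intro hX
    obtain ⟨L, hL, rfl⟩ :=
      hX.exists_isRegular_image (fun g => ⟨g.toWord, mk_toWord⟩) hmk_nil hmk_append
    have hwords : toWord '' (mk '' L) = {u | IsReduced u} ∩ {u | ∃ v ∈ L, Red v u} := by
      ext u
      constructor
      · rintro ⟨_, ⟨v, hv, rfl⟩, rfl⟩
        exact ⟨isReduced_toWord, v, hv, (toWord_mk (L₁ := v)).symm ▸ reduce.red⟩
      · rintro ⟨hu, v, hv, hvu⟩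
        refine ⟨mk v, ⟨v, hv, rfl⟩, ?_⟩
        rw [toWord_mk, reduce.eq_of_red hvu, isReduced_iff_reduce_eq.1 hu]
    rw [hwords]
    exact isRegular_setOf_isReduced.inf hL.setOf_exists_red
  · intro hX
    have := hX.isRational_image hmk_nil hmk_append
    rwa [Set.image_image, funext fun g => mk_toWord (x := g), Set.image_id'] at this

end FreeGroup

theorem rat_free_group_closed_boolean (n : ℕ) :
    (∀ X Y : Set (FreeGroup (Fin n)), IsRational X → IsRational Y → IsRational (X ∩ Y)) ∧
    (∀ X : Set (FreeGroup (Fin n)), IsRational X → IsRational Xᶜ) := by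
  simp only [FreeGroup.isRational_iff_isRegular_image_toWord]
  refine ⟨fun X Y hX hY => ?_, fun X hX => ?_⟩
  · rw [Set.image_inter FreeGroup.toWord_injective]
    exact hX.inf hY
  · rw [Set.image_compl_eq_range_sdiff_image FreeGroup.toWord_injective, FreeGroup.range_toWord,
      Set.sdiff_eq]
    exact FreeGroup.isRegular_setOf_isReduced.inf hX.compl
end

section
/- Every finitely generated residually finite group is hopfian: every surjective endomorphism is an automorphism (Mal'cev's theorem). -/
/-!
Precomposition with a surjective endomorphism `φ` of `G` is an injective self-map of `Hom(G, H)`.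
For `G` finitely generated and `H` finite this set is finite, so the map is also surjective: every
homomorphism to a finite group factors through `φ` and hence kills `ker φ`. Residual finiteness
then forces `ker φ` to be trivial.
-/

namespace MonoidHom

variable {M N : Type*} [Monoid M] [Monoid N]

theorem finite_of_fg [Monoid.FG M] [Finite N] : Finite (M →* N) := by
  obtain ⟨S, hS⟩ := Monoid.FG.fg_top (M := M)
  refine Finite.of_injective (fun f : M →* N => fun s : S => f s) fun f f' h => ?_
  exact eq_of_eqOn_denseM hS fun x hx => congrFun h ⟨x, hx⟩

theorem exists_comp_eq_of_surjective [Monoid.FG M] [Finite N] {φ : M →* M}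
    (hφ : Function.Surjective φ) (ψ : M →* N) : ∃ f : M →* N, f.comp φ = ψ := by
  have := finite_of_fg (M := M) (N := N)
  have hinj : Function.Injective fun f : M →* N => f.comp φ :=
    fun _ _ h => (cancel_right hφ).mp h
  exact Finite.injective_iff_surjective.mp hinj ψ

theorem map_eq_one_of_surjective_of_map_eq_one [Monoid.FG M] [Finite N] {φ : M →* M}
    (hφ : Function.Surjective φ) (ψ : M →* N) {g : M} (hg : φ g = 1) : ψ g = 1 := by
  obtain ⟨f, rfl⟩ := exists_comp_eq_of_surjective hφ ψ
  rw [comp_apply, hg, map_one]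

end MonoidHom

theorem malcev_hopfian (G : Type*) [Group G] (hfg : Group.FG G)
    (hrf : ∀ g : G, g ≠ 1 → ∃ (H : Type) (_ : Group H) (_ : Fintype H)
      (f : G →* H), f g ≠ 1)
    (φ : G →* G) (hsurj : Function.Surjective φ) :
    Function.Injective φ := by
  have : Monoid.FG G := Group.fg_iff_monoid_fg.mp hfg
  refine (injective_iff_map_eq_one φ).mpr fun g hg => ?_
  by_contra hg1
  obtain ⟨H, _, _, ψ, hψ⟩ := hrf g hg1
  exact hψ (MonoidHom.map_eq_one_of_surjective_of_map_eq_one hsurj ψ hg)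
end
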